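/- arXiv:1509.00916 — 4 statements merged into one kernel-verified Lean document; each statement's English description precedes it below -/
import Mathlib

section
/- Let G = (V, E) be a finite simple graph and let E = E1 ∪ E2 be a partition of its edge set such that the spanning subgraph (V, E2) is bipartite. Then the graph G' obtained from G by subdividing each edge of E1 twice is triangle-free, i.e., G' contains no three mutually adjacent vertices. -/
open SimpleGraph Finset

/-- The type of new vertices added when each edge of `E1` is subdivided twice:
for an edge `e = {u, v} ∈ E1`, the ordered pair `(u, v)` represents the new vertex
`v'_{e,u}` (the one adjacent to `u`), and `(v, u)` represents `v'_{e,v}`. -/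
abbrev NewVert (V : Type*) (E1 : Finset (Sym2 V)) : Type _ :=
  {p : V × V // s(p.1, p.2) ∈ E1 ∧ p.1 ≠ p.2}

/-- The graph `G'` obtained from `G` by subdividing each edge of `E1` twice:
an edge `e = {u, v} ∈ E1` is replaced by the path `u — v'_{e,u} — v'_{e,v} — v`,
and edges not in `E1` are kept unchanged. -/
def subdivide {V : Type*} (G : SimpleGraph V) (E1 : Finset (Sym2 V)) :
    SimpleGraph (V ⊕ NewVert V E1) where
  Adj x y :=
    match x, y with
    | Sum.inl u, Sum.inl w => G.Adj u w ∧ s(u, w) ∉ E1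
    | Sum.inl u, Sum.inr p => u = p.val.1
    | Sum.inr p, Sum.inl u => u = p.val.1
    | Sum.inr p, Sum.inr q => p.val.1 = q.val.2 ∧ p.val.2 = q.val.1
  symm := by
    constructor
    rintro (u | p) (w | q) h
    · exact ⟨h.1.symm, fun hc => h.2 (by rwa [Sym2.eq_swap] at hc)⟩
    · exact h
    · exact h
    · exact ⟨h.2.symm, h.1.symm⟩
  loopless := by
    constructor
    rintro (u | p) h
    · exact G.irrefl h.1
    · exact p.prop.2 h.1

/-! A new vertex `v'_{e,u}` has exactly two neighbours, `u` and its twin `v'_{e,v}`, and these are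
not adjacent to each other, so a new vertex lies on no triangle. A triangle on old vertices only
uses edges outside `E1`, i.e. edges of the bipartite graph `(V, E2)`, and a triangle cannot be
properly 2-coloured. -/

namespace NewVert

variable {V : Type*} {E1 : Finset (Sym2 V)}

/-- The twin of `v'_{e,u}` is `v'_{e,v}`, the other new vertex on the same edge. -/
def twin (p : NewVert V E1) : NewVert V E1 :=
  ⟨(p.1.2, p.1.1), by rw [Sym2.eq_swap]; exact p.2.1, p.2.2.symm⟩

end NewVert

section subdivide

variable {V : Type*} {G : SimpleGraph V} {E1 : Finset (Sym2 V)}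

theorem subdivide_adj_inr_iff {p : NewVert V E1} {x : V ⊕ NewVert V E1} :
    (subdivide G E1).Adj (.inr p) x ↔ x = .inl p.1.1 ∨ x = .inr p.twin := by
  obtain ⟨⟨a, b⟩, _⟩ := p
  rcases x with u | ⟨⟨c, d⟩, _⟩
  · simp [subdivide]
  · simp only [subdivide, NewVert.twin, reduceCtorEq, false_or, Sum.inr.injEq, Subtype.mk.injEq,
      Prod.mk.injEq]
    tauto

theorem subdivide_not_adj_inl_twin (p : NewVert V E1) :
    ¬ (subdivide G E1).Adj (.inl p.1.1) (.inr p.twin) :=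
  p.2.2

theorem subdivide_not_adj_of_adj_inr {p : NewVert V E1} {x y : V ⊕ NewVert V E1}
    (hx : (subdivide G E1).Adj (.inr p) x) (hy : (subdivide G E1).Adj (.inr p) y) :
    ¬ (subdivide G E1).Adj x y := by
  rw [subdivide_adj_inr_iff] at hx hy
  rcases hx with rfl | rfl <;> rcases hy with rfl | rfl
  · exact (subdivide G E1).irrefl
  · exact subdivide_not_adj_inl_twin p
  · exact fun h => subdivide_not_adj_inl_twin p h.symm
  · exact (subdivide G E1).irrefl

end subdivide

theorem statement1_general {V : Type*} [Fintype V] [DecidableEq V] (G : SimpleGraph V)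
    [DecidableRel G.Adj] (E1 E2 : Finset (Sym2 V))
    (hunion : E1 ∪ E2 = G.edgeFinset)
    (hbip : ∃ c : V → Bool, ∀ u v : V, s(u, v) ∈ E2 → c u ≠ c v) :
    (subdivide G E1).CliqueFree 3 := by
  obtain ⟨c, hc⟩ := hbip
  have hcolor : ∀ u w, (subdivide G E1).Adj (.inl u) (.inl w) → c u ≠ c w := fun u w h =>
    hc u w <| (mem_union.mp (hunion ▸ mem_edgeFinset.mpr h.1)).resolve_left h.2
  intro t ht
  obtain ⟨a, b, d, hab, had, hbd, -⟩ := is3Clique_iff.mp ht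
  rcases a with u | p
  · rcases b with w | q
    · rcases d with x | r
      · have hw : c w = !c u := Bool.eq_not_of_ne (hcolor u w hab).symm
        have hx : c x = !c u := Bool.eq_not_of_ne (hcolor u x had).symm
        exact hcolor w x hbd (hw.trans hx.symm)
      · exact subdivide_not_adj_of_adj_inr had.symm hbd.symm hab
    · exact subdivide_not_adj_of_adj_inr hab.symm hbd had
  · exact subdivide_not_adj_of_adj_inr hab had hbd

/-- If the edge set of a finite simple graph `G` is partitioned into
`E1 ∪ E2` such that the spanning subgraph `(V, E2)` is bipartite, then the graph `G'`
obtained from `G` by subdividing each edge of `E1` twice is triangle-free. -/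
theorem statement1 {V : Type*} [Fintype V] [DecidableEq V] (G : SimpleGraph V)
    [DecidableRel G.Adj] (E1 E2 : Finset (Sym2 V))
    (hdisj : Disjoint E1 E2) (hunion : E1 ∪ E2 = G.edgeFinset)
    (hbip : ∃ c : V → Bool, ∀ u v : V, s(u, v) ∈ E2 → c u ≠ c v) :
    (subdivide G E1).CliqueFree 3 :=
  statement1_general G E1 E2 hunion hbip
end

section
/- Let H be a finite simple graph with vertex set {1,…,N} and let C be a set of l ≥ 1 distinct edges of H. Then l − 1 ≤ cost(C) ≤ 2l − 1. -/
open SimpleGraph Finset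

/-- For a graph on vertex set `Fin N`, the edge `e = {i, j}` is identified with the
point `x_e = b_i + b_j` in `ℝ^N`, where `b_i` is the `i`-th standard basis vector. -/
noncomputable def edgePoint (N : ℕ) (e : Sym2 (Fin N)) : EuclideanSpace ℝ (Fin N) :=
  Sym2.lift ⟨fun i j => EuclideanSpace.single i (1 : ℝ) + EuclideanSpace.single j (1 : ℝ),
    fun _ _ => add_comm _ _⟩ e

/-- The (k-means) cost of a finite set `C` of edges:
`cost(C) = inf_{c ∈ ℝ^N} Σ_{e ∈ C} ‖x_e − c‖²`. -/
noncomputable def cost (N : ℕ) (C : Finset (Sym2 (Fin N))) : ℝ :=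
  ⨅ c : EuclideanSpace ℝ (Fin N), ∑ e ∈ C, ‖edgePoint N e - c‖ ^ 2

/-!
Every edge point has squared norm 2, so by the parallel axis theorem the cost is attained at the
centroid and equals `2l - ‖S‖² / l`, where `S = ∑ x_e`. Expanding `‖S‖²` as the sum of the Gram
matrix, whose diagonal entries are 2 and whose off-diagonal entries `⟪x_e, x_f⟫` are 0 or 1 (the
number of common endpoints of two distinct edges), gives `2l ≤ ‖S‖² ≤ l² + l`.
-/

open RealInnerProductSpace

section SumOfSquares

variable {ι E : Type*} [NormedAddCommGroup E] [InnerProductSpace ℝ E]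

lemma norm_sum_sq_eq_sum_sum_inner (s : Finset ι) (x : ι → E) :
    ‖∑ i ∈ s, x i‖ ^ 2 = ∑ i ∈ s, ∑ j ∈ s, ⟪x i, x j⟫ := by
  rw [← real_inner_self_eq_norm_sq, sum_inner]
  simp_rw [inner_sum]

lemma sum_norm_sq_le_norm_sum_sq {s : Finset ι} {x : ι → E}
    (h : ∀ i ∈ s, ∀ j ∈ s, 0 ≤ ⟪x i, x j⟫) :
    ∑ i ∈ s, ‖x i‖ ^ 2 ≤ ‖∑ i ∈ s, x i‖ ^ 2 := by
  rw [norm_sum_sq_eq_sum_sum_inner]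
  refine sum_le_sum fun i hi => ?_
  rw [← real_inner_self_eq_norm_sq]
  exact single_le_sum (h i hi) hi

lemma norm_sum_sq_le_sum_norm_sq_add [DecidableEq ι] {s : Finset ι} {x : ι → E} {b : ℝ}
    (h : ∀ i ∈ s, ∀ j ∈ s, i ≠ j → ⟪x i, x j⟫ ≤ b) :
    ‖∑ i ∈ s, x i‖ ^ 2 ≤ ∑ i ∈ s, ‖x i‖ ^ 2 + #s * (#s - 1) * b := by
  have hrow : ∀ i ∈ s, ∑ j ∈ s, ⟪x i, x j⟫ ≤ ‖x i‖ ^ 2 + (#s - 1) * b := by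
    intro i hi
    rw [← add_sum_erase s _ hi, real_inner_self_eq_norm_sq]
    gcongr
    calc ∑ j ∈ s.erase i, ⟪x i, x j⟫ ≤ #(s.erase i) • b :=
          sum_le_card_nsmul _ _ _ fun j hj =>
            h i hi j (mem_of_mem_erase hj) (ne_of_mem_erase hj).symm
      _ = (#s - 1) * b := by
          rw [card_erase_of_mem hi, nsmul_eq_mul, Nat.cast_pred (card_pos.mpr ⟨i, hi⟩)]
  calc ‖∑ i ∈ s, x i‖ ^ 2 ≤ ∑ i ∈ s, (‖x i‖ ^ 2 + (#s - 1) * b) := by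
        rw [norm_sum_sq_eq_sum_sum_inner]
        exact sum_le_sum hrow
    _ = ∑ i ∈ s, ‖x i‖ ^ 2 + #s * (#s - 1) * b := by
        rw [sum_add_distrib, sum_const, nsmul_eq_mul, mul_assoc]

lemma sum_norm_sub_sq_eq {s : Finset ι} (hs : s.Nonempty) (x : ι → E) (c : E) :
    ∑ i ∈ s, ‖x i - c‖ ^ 2 = ∑ i ∈ s, ‖x i‖ ^ 2 - ‖∑ i ∈ s, x i‖ ^ 2 / #s
      + #s * ‖c - (#s : ℝ)⁻¹ • ∑ i ∈ s, x i‖ ^ 2 := by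
  have hn : (#s : ℝ) ≠ 0 := by exact_mod_cast hs.card_pos.ne'
  simp_rw [norm_sub_sq_real]
  rw [sum_add_distrib, sum_sub_distrib, ← mul_sum, ← sum_inner, sum_const, nsmul_eq_mul,
    inner_smul_right, norm_smul, mul_pow, Real.norm_eq_abs, sq_abs, real_inner_comm c]
  field_simp
  ring

lemma iInf_sum_norm_sub_sq {s : Finset ι} (hs : s.Nonempty) (x : ι → E) :
    ⨅ c : E, ∑ i ∈ s, ‖x i - c‖ ^ 2 = ∑ i ∈ s, ‖x i‖ ^ 2 - ‖∑ i ∈ s, x i‖ ^ 2 / #s := by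
  simp_rw [sum_norm_sub_sq_eq hs]
  set m : E := (#s : ℝ)⁻¹ • ∑ i ∈ s, x i
  set A : ℝ := ∑ i ∈ s, ‖x i‖ ^ 2 - ‖∑ i ∈ s, x i‖ ^ 2 / #s
  have hA : ∀ c : E, A ≤ A + #s * ‖c - m‖ ^ 2 := fun c =>
    le_add_of_nonneg_right (by positivity)
  exact le_antisymm ((ciInf_le ⟨A, Set.forall_mem_range.mpr hA⟩ m).trans_eq (by simp))
    (le_ciInf hA)

end SumOfSquares

section EdgePoint

variable {N : ℕ}

lemma inner_edgePoint_mk (a b c d : Fin N) :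
    ⟪edgePoint N s(a, b), edgePoint N s(c, d)⟫ =
      ((if c = a then (1 : ℝ) else 0) + if c = b then 1 else 0)
        + ((if d = a then 1 else 0) + if d = b then 1 else 0) := by
  simp [edgePoint, inner_add_left, inner_add_right, EuclideanSpace.inner_single_left]
  simp only [@eq_comm _ a, @eq_comm _ b]

lemma inner_edgePoint_nonneg (e f : Sym2 (Fin N)) : 0 ≤ ⟪edgePoint N e, edgePoint N f⟫ := by
  induction e using Sym2.inductionOn with
  | hf a b =>
    induction f using Sym2.inductionOn with
    | hf c d =>
      rw [inner_edgePoint_mk]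
      split_ifs <;> norm_num

lemma norm_edgePoint_sq {e : Sym2 (Fin N)} (he : ¬ e.IsDiag) : ‖edgePoint N e‖ ^ 2 = 2 := by
  induction e using Sym2.inductionOn with
  | hf a b =>
    rw [Sym2.mk_isDiag_iff] at he
    rw [← real_inner_self_eq_norm_sq, inner_edgePoint_mk]
    norm_num [he, Ne.symm he]

lemma inner_edgePoint_le_one {e f : Sym2 (Fin N)} (he : ¬ e.IsDiag) (hf : ¬ f.IsDiag)
    (hef : e ≠ f) : ⟪edgePoint N e, edgePoint N f⟫ ≤ 1 := by
  induction e using Sym2.inductionOn with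
  | hf a b =>
    induction f using Sym2.inductionOn with
    | hf c d =>
      rw [Sym2.mk_isDiag_iff] at he hf
      rw [ne_eq, Sym2.eq_iff] at hef
      push Not at hef
      rw [inner_edgePoint_mk]
      split_ifs <;> simp_all

lemma sum_norm_edgePoint_sq {C : Finset (Sym2 (Fin N))} (hC : ∀ e ∈ C, ¬ e.IsDiag) :
    ∑ e ∈ C, ‖edgePoint N e‖ ^ 2 = 2 * #C := by
  rw [sum_congr rfl fun e he => norm_edgePoint_sq (hC e he), sum_const, nsmul_eq_mul, mul_comm]

lemma cost_eq_of_not_isDiag {C : Finset (Sym2 (Fin N))} (hne : C.Nonempty)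
    (hC : ∀ e ∈ C, ¬ e.IsDiag) :
    cost N C = 2 * #C - ‖∑ e ∈ C, edgePoint N e‖ ^ 2 / #C := by
  rw [cost, iInf_sum_norm_sub_sq hne, sum_norm_edgePoint_sq hC]

end EdgePoint

/-- For a set `C` of `l ≥ 1` distinct edges of a finite simple graph `H`
on vertex set `{1, …, N}`, we have `l − 1 ≤ cost(C) ≤ 2l − 1`. -/
theorem statement5 {N : ℕ} (H : SimpleGraph (Fin N)) (C : Finset (Sym2 (Fin N)))
    (hC : ↑C ⊆ H.edgeSet) (l : ℕ) (hl : C.card = l) (hl1 : 1 ≤ l) :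
    (l : ℝ) - 1 ≤ cost N C ∧ cost N C ≤ 2 * l - 1 := by
  subst hl
  have hdiag : ∀ e ∈ C, ¬ e.IsDiag := fun e he => H.not_isDiag_of_mem_edgeSet (hC he)
  have hpos : (0 : ℝ) < #C := by exact_mod_cast hl1
  have hlower : 2 * (#C : ℝ) ≤ ‖∑ e ∈ C, edgePoint N e‖ ^ 2 := by
    rw [← sum_norm_edgePoint_sq hdiag]
    exact sum_norm_sq_le_norm_sum_sq fun e _ f _ => inner_edgePoint_nonneg e f
  have hupper : ‖∑ e ∈ C, edgePoint N e‖ ^ 2 ≤ (#C + 1) * #C := by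
    have := norm_sum_sq_le_sum_norm_sq_add (b := 1) fun e he f hf hef =>
      inner_edgePoint_le_one (hdiag e he) (hdiag f hf) hef
    rw [sum_norm_edgePoint_sq hdiag] at this
    linarith
  rw [cost_eq_of_not_isDiag (card_pos.mp (by omega)) hdiag]
  constructor
  · linarith [(div_le_iff₀ hpos).mpr hupper]
  · linarith [(le_div_iff₀ hpos).mpr hlower]
end

section
/- Let H be a finite simple graph with vertex set {1,…,N} and let C be an l-star in H, i.e., a set of l ≥ 1 distinct edges all incident to a common vertex. Then cost(C) = l − 1. -/
open SimpleGraph Finset RealInnerProductSpace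

/-- A star is a set of distinct edges all incident to a common vertex. -/
def IsStar {N : ℕ} (C : Finset (Sym2 (Fin N))) : Prop :=
  ∃ v : Fin N, ∀ e ∈ C, v ∈ e

/-- For an `l`-star `C` (a set of `l ≥ 1` distinct edges all incident to a
common vertex) in a finite simple graph `H` on vertex set `{1, …, N}`,
`cost(C) = l − 1`. -/
theorem statement9 {N : ℕ} (H : SimpleGraph (Fin N)) (C : Finset (Sym2 (Fin N)))
    (hC : ↑C ⊆ H.edgeSet) (l : ℕ) (hl : C.card = l) (hl1 : 1 ≤ l)
    (hstar : IsStar C) :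
    cost N C = (l : ℝ) - 1 := by
  classical
  obtain ⟨v, hv⟩ := hstar
  set x : Sym2 (Fin N) → EuclideanSpace ℝ (Fin N) := edgePoint N with hxdef
  -- representation of each edge
  have hrep : ∀ e ∈ C, ∃ a : Fin N, a ≠ v ∧ e = s(v, a) := by
    intro e he
    have hm := hv e he
    refine ⟨Sym2.Mem.other hm, ?_, (Sym2.other_spec hm).symm⟩
    exact Sym2.other_ne (H.not_isDiag_of_mem_edgeSet (hC he)) hm
  have hxmk : ∀ a : Fin N, x s(v, a) =
      EuclideanSpace.single v (1:ℝ) + EuclideanSpace.single a (1:ℝ) := by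
    intro a; simp [hxdef, edgePoint]
  have key : ∀ e ∈ C, ∀ e' ∈ C,
      ⟪x e, x e'⟫ = 1 + (if e = e' then 1 else 0) := by
    intro e he e' he'
    obtain ⟨a, hav, rfl⟩ := hrep e he
    obtain ⟨b, hbv, rfl⟩ := hrep e' he'
    have heq : (s(v, a) = s(v, b)) ↔ a = b := by
      constructor
      · intro h
        rw [Sym2.eq_iff] at h
        rcases h with ⟨-, h⟩ | ⟨h, -⟩
        · exact h
        · exact absurd h.symm hbv
      · rintro rfl; rfl
    rw [hxmk, hxmk, inner_add_left, inner_add_right, inner_add_right]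
    simp only [EuclideanSpace.inner_single_left, RCLike.star_def, conj_trivial, one_mul,
      EuclideanSpace.single_apply, heq]
    by_cases hab : a = b <;>
      simp [hab, hav, hbv, Ne.symm hav, Ne.symm hbv, eq_comm]
  set s : EuclideanSpace ℝ (Fin N) := ∑ e ∈ C, x e with hs
  have hss : ⟪s, s⟫ = (l:ℝ)^2 + l := by
    rw [hs, sum_inner]
    have : ∀ e ∈ C, ⟪x e, ∑ e' ∈ C, x e'⟫ = (l:ℝ) + 1 := by
      intro e he
      rw [inner_sum]
      rw [Finset.sum_congr rfl (fun e' he' => key e he e' he')]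
      rw [Finset.sum_add_distrib, Finset.sum_ite_eq C e (fun _ => (1:ℝ))]
      simp [he, hl]
    rw [Finset.sum_congr rfl this]
    simp [hl]; ring
  have hxx : ∀ e ∈ C, ‖x e‖^2 = 2 := by
    intro e he
    rw [← real_inner_self_eq_norm_sq, key e he e he]
    norm_num
  have hlpos : (0:ℝ) < l := by exact_mod_cast hl1
  -- main identity
  have hmain : ∀ c : EuclideanSpace ℝ (Fin N),
      ∑ e ∈ C, ‖x e - c‖ ^ 2 = ((l:ℝ) - 1) + l * ‖c - (l:ℝ)⁻¹ • s‖^2 := by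
    intro c
    have expand : ∑ e ∈ C, ‖x e - c‖ ^ 2
        = (∑ e ∈ C, ‖x e‖^2) - 2 * ⟪s, c⟫ + l * ‖c‖^2 := by
      rw [Finset.sum_congr rfl (fun e he => norm_sub_sq_real (x e) c)]
      rw [hs, sum_inner, Finset.sum_add_distrib, Finset.sum_sub_distrib,
        ← Finset.mul_sum, Finset.sum_const, hl]
      ring
    rw [expand, Finset.sum_congr rfl hxx, Finset.sum_const, hl]
    have hsn : ‖s‖^2 = (l:ℝ)^2 + l := by rw [← real_inner_self_eq_norm_sq]; exact hss
    have h2 : ‖c - (l:ℝ)⁻¹ • s‖^2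
        = ‖c‖^2 - 2 * (l:ℝ)⁻¹ * ⟪s, c⟫ + (l:ℝ)⁻¹^2 * ((l:ℝ)^2 + l) := by
      rw [norm_sub_sq_real, real_inner_smul_right, norm_smul, mul_pow, hsn,
        real_inner_comm, Real.norm_eq_abs, sq_abs]
      ring
    rw [h2]
    field_simp
    ring
  have hlb : ∀ c : EuclideanSpace ℝ (Fin N),
      ((l:ℝ) - 1) ≤ ∑ e ∈ C, ‖x e - c‖ ^ 2 := by
    intro c
    rw [hmain c]
    nlinarith [sq_nonneg ‖c - (l:ℝ)⁻¹ • s‖, hlpos]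
  have hbdd : BddBelow (Set.range fun c : EuclideanSpace ℝ (Fin N) =>
      ∑ e ∈ C, ‖x e - c‖ ^ 2) := ⟨(l:ℝ) - 1, by rintro r ⟨c, rfl⟩; exact hlb c⟩
  refine le_antisymm ?_ (le_ciInf hlb)
  have := ciInf_le hbdd ((l:ℝ)⁻¹ • s)
  rw [cost]
  refine this.trans_eq ?_
  rw [hmain]
  simp
end

section
/- Let H be a finite simple graph with vertex set {1,…,N} and m edges, and let k be an integer with 1 ≤ k ≤ m. If H has a vertex cover of size at most k, then the edge set of H admits a partition into k nonempty parts C_1, …, C_k, each of which is a star (all edges of the part share a common vertex), and consequently the total cost Σ_{i=1}^k cost(C_i) of this partition is at most m − k. -/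
open SimpleGraph Finset

/-- A set `S` of vertices is a vertex cover of `H` if every edge of `H` has at
least one endpoint in `S`. -/
def IsVertexCover {W : Type*} (H : SimpleGraph W) (S : Set W) : Prop :=
  ∀ ⦃u v : W⦄, H.Adj u v → u ∈ S ∨ v ∈ S

/-!
Choose for every edge an endpoint lying in the vertex cover; the fibres of this choice are at
most `k` stars. Keeping one edge in each fibre and splitting off enough of the other edges as
singletons yields exactly `k` nonempty stars. The points of a star with centre `v` and `n` edges
are `b_v` plus `n` distinct basis vectors, i.e. a translate of an orthonormal family, whose
squared distances to its centroid sum to `n - 1`; summing over the parts gives `m - k`.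
-/

open scoped InnerProductSpace

theorem Orthonormal.sum_norm_sub_centroid_sq {ι E : Type*} [Fintype ι] [Nonempty ι]
    [NormedAddCommGroup E] [InnerProductSpace ℝ E] {u : ι → E} (hu : Orthonormal ℝ u) :
    ∑ i, ‖u i - (Fintype.card ι : ℝ)⁻¹ • ∑ j, u j‖ ^ 2 = Fintype.card ι - 1 := by
  classical
  set n : ℝ := (Fintype.card ι : ℝ) with hn_def
  have hn : n ≠ 0 := Nat.cast_ne_zero.2 Fintype.card_ne_zero
  have hinner : ∀ i, ⟪u i, ∑ j, u j⟫_ℝ = 1 := fun i => by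
    simp [inner_sum, orthonormal_iff_ite.1 hu]
  have hnorm : ‖∑ j, u j‖ ^ 2 = n := by
    rw [← real_inner_self_eq_norm_sq, sum_inner]
    simp [hinner, n]
  have hterm : ∀ i, ‖u i - n⁻¹ • ∑ j, u j‖ ^ 2 = 1 - n⁻¹ := fun i => by
    rw [norm_sub_sq_real, real_inner_smul_right, hinner, norm_smul, mul_pow, hnorm, hu.1 i,
      Real.norm_eq_abs, sq_abs]
    field_simp
    ring
  simp only [hterm, sum_const, card_univ, nsmul_eq_mul, ← hn_def]
  field_simp

theorem edgePoint_eq_of_mem {N : ℕ} {v : Fin N} {e : Sym2 (Fin N)} (h : v ∈ e) :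
    edgePoint N e = EuclideanSpace.single v 1 + EuclideanSpace.single (Sym2.Mem.other h) 1 := by
  conv_lhs => rw [← Sym2.other_spec h]
  rfl

theorem cost_le_sum (N : ℕ) (C : Finset (Sym2 (Fin N))) (c : EuclideanSpace ℝ (Fin N)) :
    cost N C ≤ ∑ e ∈ C, ‖edgePoint N e - c‖ ^ 2 :=
  ciInf_le ⟨0, by rintro _ ⟨c, rfl⟩; positivity⟩ c

theorem cost_le_card_sub_one_of_isStar {N : ℕ} {C : Finset (Sym2 (Fin N))} (hC : C.Nonempty)
    (hstar : IsStar C) : cost N C ≤ #C - 1 := by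
  obtain ⟨v, hv⟩ := hstar
  have : Nonempty C := hC.coe_sort
  let y : C → EuclideanSpace ℝ (Fin N) := fun e =>
    EuclideanSpace.single (Sym2.Mem.other (hv e e.2)) 1
  have hy : Orthonormal ℝ y := by
    have hinj : Function.Injective fun e : C => Sym2.Mem.other (hv e e.2) := fun e e' h => by
      rw [Subtype.ext_iff, ← Sym2.other_spec (hv e e.2), ← Sym2.other_spec (hv e' e'.2)]
      exact congrArg _ h
    have := (EuclideanSpace.basisFun (Fin N) ℝ).orthonormal.comp _ hinj
    simpa only [Function.comp_def, OrthonormalBasis.coe_toBasis,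
      EuclideanSpace.basisFun_apply] using this
  calc cost N C ≤ ∑ e ∈ C, ‖edgePoint N e -
        (EuclideanSpace.single v 1 + (Fintype.card C : ℝ)⁻¹ • ∑ e', y e')‖ ^ 2 :=
        cost_le_sum N C _
    _ = ∑ e : C, ‖y e - (Fintype.card C : ℝ)⁻¹ • ∑ e', y e'‖ ^ 2 := by
        rw [← sum_coe_sort]
        refine sum_congr rfl fun e _ => ?_
        rw [edgePoint_eq_of_mem (hv e e.2), add_sub_add_left_eq_sub]
    _ = #C - 1 := by rw [hy.sum_norm_sub_centroid_sq, Fintype.card_coe]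

structure IsIndexedPartition {α ι : Type*} (E : Finset α) (C : ι → Finset α) : Prop where
  nonempty : ∀ i, (C i).Nonempty
  disjoint : ∀ i j, i ≠ j → Disjoint (C i) (C j)
  mem_iff : ∀ a, a ∈ E ↔ ∃ i, a ∈ C i

theorem IsIndexedPartition.sum_card {α ι : Type*} [DecidableEq α] [Fintype ι] {E : Finset α}
    {C : ι → Finset α} (hC : IsIndexedPartition E C) : ∑ i, #(C i) = #E := by
  have hE : E = univ.biUnion C := by ext a; simp [hC.mem_iff]
  rw [hE, card_biUnion fun i _ j _ hij => hC.disjoint i j hij]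

theorem exists_isIndexedPartition_fibers {α γ : Type*} [DecidableEq γ] (E : Finset α)
    (h : α → γ) {k : ℕ} (hk : #(E.image h) = k) :
    ∃ C : Fin k → Finset α, IsIndexedPartition E C ∧
      ∀ i, ∀ a ∈ C i, ∀ b ∈ C i, h a = h b := by
  classical
  let σ : E.image h ≃ Fin k := Fintype.equivFinOfCardEq (by rw [Fintype.card_coe, hk])
  let τ : Fin k → γ := fun i => σ.symm i
  have hτ : Function.Injective τ := Subtype.val_injective.comp σ.symm.injective
  refine ⟨fun i => E.filter (h · = τ i), ⟨fun i => ?_, fun i j hij => ?_, fun a => ?_⟩, ?_⟩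
  · obtain ⟨a, ha, hai⟩ := mem_image.1 (σ.symm i).2
    exact ⟨a, mem_filter.2 ⟨ha, hai⟩⟩
  · exact disjoint_filter.2 fun a _ hi hj => hτ.ne hij (hi.symm.trans hj)
  · refine ⟨fun ha => ⟨σ ⟨h a, mem_image_of_mem h ha⟩, ?_⟩, fun ⟨i, hi⟩ => (mem_filter.1 hi).1⟩
    simp [τ, ha]
  · intro i a ha b hb
    exact (mem_filter.1 ha).2.trans (mem_filter.1 hb).2.symm

theorem exists_refinement_card_image_eq {α β : Type*} [DecidableEq α] [DecidableEq β]
    (E : Finset α) (g : α → β) {k : ℕ} (hgk : #(E.image g) ≤ k) (hkE : k ≤ #E) :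
    ∃ h : α → β ⊕ α, #(E.image h) = k ∧ ∀ a b, h a = h b → g a = g b := by
  -- `R` keeps one element of every fibre of `g`, so removing elements outside `R` from `E`
  -- does not shrink its image.
  obtain ⟨R, hRE, hRinj, hRg⟩ := exists_subset_injOn_image_eq_of_surjOn (E : Set α) (E.image g)
    (by simpa using Set.surjOn_image g (E : Set α))
  have hR : #R = #(E.image g) := by rw [← hRg, card_image_of_injOn hRinj]
  obtain ⟨T, hTR, hT⟩ := exists_subset_card_eq (s := E \ R) (n := k - #(E.image g))
    (by rw [card_sdiff_of_subset hRE]; omega)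
  have hgT : (E \ T).image g = E.image g := by
    refine (image_subset_image sdiff_subset).antisymm ?_
    rw [← hRg]
    exact image_subset_image fun a ha =>
      mem_sdiff.2 ⟨hRE ha, fun haT => (mem_sdiff.1 (hTR haT)).2 ha⟩
  refine ⟨fun a => if a ∈ T then .inr a else .inl (g a), ?_, fun a b hab => ?_⟩
  · have : E.image (fun a => if a ∈ T then .inr a else .inl (g a)) =
        ((E \ T).image g).disjSum T := by
      have hTE : T ⊆ E := hTR.trans sdiff_subset
      ext (x | x) <;> simp only [mem_image, mem_disjSum, mem_sdiff] <;> grind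
    rw [this, card_disjSum, hgT, hT]
    omega
  · dsimp only at hab
    split_ifs at hab <;> simp_all

theorem IsVertexCover.exists_endpoint_mem {W : Type*} {H : SimpleGraph W} {S : Set W}
    (hS : _root_.IsVertexCover H S) (e : Sym2 W) : ∃ v ∈ e, e ∈ H.edgeSet → v ∈ S := by
  induction e using Sym2.ind with
  | h a b =>
    by_cases ha : a ∈ S
    · exact ⟨a, Sym2.mem_mk_left a b, fun _ => ha⟩
    · exact ⟨b, Sym2.mem_mk_right a b, fun hab => (hS hab).resolve_left ha⟩

theorem statement10_general {N : ℕ} (H : SimpleGraph (Fin N)) [DecidableRel H.Adj]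
    (m : ℕ) (hm : H.edgeFinset.card = m) (k : ℕ) (hkm : k ≤ m)
    (hcover : ∃ S : Finset (Fin N), _root_.IsVertexCover H ↑S ∧ S.card ≤ k) :
    ∃ CC : Fin k → Finset (Sym2 (Fin N)),
      (∀ i, (CC i).Nonempty) ∧
      (∀ i, IsStar (CC i)) ∧
      (∀ i j, i ≠ j → Disjoint (CC i) (CC j)) ∧
      (∀ e, e ∈ H.edgeFinset ↔ ∃ i, e ∈ CC i) ∧
      ∑ i, cost N (CC i) ≤ (m : ℝ) - k := by
  classical
  obtain ⟨S, hS, hSk⟩ := hcover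
  choose g hge hgS using hS.exists_endpoint_mem
  obtain ⟨h, hhk, hgh⟩ := exists_refinement_card_image_eq H.edgeFinset g
    ((card_le_card (image_subset_iff.2 fun e he => hgS e (mem_edgeFinset.1 he))).trans hSk)
    (hm ▸ hkm)
  obtain ⟨CC, hCC, hhCC⟩ := exists_isIndexedPartition_fibers H.edgeFinset h hhk
  have hstar : ∀ i, IsStar (CC i) := fun i => by
    obtain ⟨e₀, he₀⟩ := hCC.nonempty i
    refine ⟨g e₀, fun e he => ?_⟩
    rw [← hgh _ _ (hhCC i e he e₀ he₀)]
    exact hge e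
  refine ⟨CC, hCC.nonempty, hstar, hCC.disjoint, hCC.mem_iff, ?_⟩
  calc ∑ i, cost N (CC i) ≤ ∑ i, ((#(CC i) : ℝ) - 1) :=
        sum_le_sum fun i _ => cost_le_card_sub_one_of_isStar (hCC.nonempty i) (hstar i)
    _ = m - k := by simp [sum_sub_distrib, ← Nat.cast_sum, hCC.sum_card, hm]

/-- Let `H` be a finite simple graph on vertex set `{1, …, N}` with `m`
edges, and let `1 ≤ k ≤ m`. If `H` has a vertex cover of size at most `k`, then the edge
set of `H` admits a partition into `k` nonempty parts `C_1, …, C_k`, each of which is a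
star, and the total cost `Σ_i cost(C_i)` is at most `m − k`. -/
theorem statement10 {N : ℕ} (H : SimpleGraph (Fin N)) [DecidableRel H.Adj]
    (m : ℕ) (hm : H.edgeFinset.card = m) (k : ℕ) (hk1 : 1 ≤ k) (hkm : k ≤ m)
    (hcover : ∃ S : Finset (Fin N), _root_.IsVertexCover H ↑S ∧ S.card ≤ k) :
    ∃ CC : Fin k → Finset (Sym2 (Fin N)),
      (∀ i, (CC i).Nonempty) ∧
      (∀ i, IsStar (CC i)) ∧
      (∀ i j, i ≠ j → Disjoint (CC i) (CC j)) ∧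
      (∀ e, e ∈ H.edgeFinset ↔ ∃ i, e ∈ CC i) ∧
      ∑ i, cost N (CC i) ≤ (m : ℝ) - k :=
  statement10_general H m hm k hkm hcover
end
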